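/- arXiv:2209.03709 — 2 statements merged into one kernel-verified Lean document; each statement's English description precedes it below -/
import Mathlib

section
/- The real cube root of 5, i.e. the real number 5^{1/3}, is an eigenvalue of the 3-power hypergraph K₄^(3), where K₄ is the complete graph on four vertices. -/
open Finset

/-- `(lam, x)` is an eigenpair of the `k`-uniform hypergraph with hyperedge set `E`:
`x` is nonzero and for every vertex `i`,
`lam * x i ^ (k-1) = ∑_{e ∈ E, i ∈ e} ∏_{v ∈ e \ {i}} x v`. -/
def IsHypergraphEigenpair {W : Type*} [Fintype W] [DecidableEq W]
    (k : ℕ) (E : Finset (Finset W)) (lam : ℂ) (x : W → ℂ) : Prop :=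
  x ≠ 0 ∧ ∀ i : W, lam * x i ^ (k - 1) =
    ∑ e ∈ E.filter (fun e => i ∈ e), ∏ v ∈ e.erase i, x v

/-- `lam` is an eigenvalue of the `k`-uniform hypergraph with hyperedge set `E`. -/
def IsHypergraphEigenvalue {W : Type*} [Fintype W] [DecidableEq W]
    (k : ℕ) (E : Finset (Finset W)) (lam : ℂ) : Prop :=
  ∃ x, IsHypergraphEigenpair k E lam x

/-- The hyperedge of the `k`-power hypergraph `G^(k)` corresponding to the edge `e` of `G`:
it consists of the two endpoints of `e` together with the `k - 2` added vertices on `e`. -/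
def powerEdge {V : Type*} [Fintype V] [DecidableEq V] (G : SimpleGraph V) [DecidableRel G.Adj]
    (k : ℕ) (e : G.edgeSet) : Finset (V ⊕ (G.edgeSet × Fin (k - 2))) :=
  Finset.univ.filter (fun v =>
    (∃ i, v = Sum.inl i ∧ i ∈ (e : Sym2 V)) ∨ ∃ t, v = Sum.inr (e, t))

/-- The hyperedge set of the `k`-power hypergraph `G^(k)`, whose vertices are the vertices of `G`
(`Sum.inl`) together with `k - 2` new vertices for each edge of `G` (`Sum.inr`). -/
def powerEdges {V : Type*} [Fintype V] [DecidableEq V] (G : SimpleGraph V) [DecidableRel G.Adj]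
    (k : ℕ) : Finset (Finset (V ⊕ (G.edgeSet × Fin (k - 2)))) :=
  Finset.univ.image (powerEdge G k)

/-! If `μ³` is an eigenvalue of a `±1`-signing `ε` of `G` with eigenvector `z`, then `μ²` is
an eigenvalue of `G^(3)`: choose cube roots `y i` of `z i`, put `y i ^ 2` on each vertex `i` of
`G` and `ε e * y i * y j / μ` on the added vertex of the edge `e = s(i, j)`.
The signing of `K₄` whose only negative edge is `s(0, 1)` has the eigenvector
`(1, 1, (θ + 1) / 2, (θ + 1) / 2)` for each `θ` with `θ² = 5`, and `θ = μ³` for a square root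
`μ` of `5^(1/3)` satisfies `θ² = 5`. -/

namespace Finset

variable {α β : Type*} [DecidableEq α] [DecidableEq β]

lemma erase_inl_disjSum (s : Finset α) (t : Finset β) (a : α) :
    (s.disjSum t).erase (Sum.inl a) = (s.erase a).disjSum t := by
  ext (v | v) <;> simp

lemma erase_inr_disjSum (s : Finset α) (t : Finset β) (b : β) :
    (s.disjSum t).erase (Sum.inr b) = s.disjSum (t.erase b) := by
  ext (v | v) <;> simp

end Finset

namespace SimpleGraph

variable {V : Type*} [Fintype V] [DecidableEq V] (G : SimpleGraph V) [DecidableRel G.Adj]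
  {k : ℕ}

lemma powerEdge_eq_disjSum (e : G.edgeSet) :
    powerEdge G k e = (e : Sym2 V).toFinset.disjSum ({e} ×ˢ univ) := by
  ext (v | ⟨e', t⟩) <;> simp [powerEdge, eq_comm]

lemma powerEdge_injective : Function.Injective (powerEdge G k) := by
  intro e e' h
  rw [powerEdge_eq_disjSum, powerEdge_eq_disjSum, disjSum_inj] at h
  exact Subtype.ext <| Sym2.ext fun v => by simpa using congrArg (v ∈ ·) h.1

lemma sum_filter_powerEdges {M : Type*} [AddCommMonoid M] (v : V ⊕ (G.edgeSet × Fin (k - 2)))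
    (F : Finset (V ⊕ (G.edgeSet × Fin (k - 2))) → M) :
    ∑ E ∈ (powerEdges G k).filter (v ∈ ·), F E =
      ∑ e with v ∈ powerEdge G k e, F (powerEdge G k e) := by
  rw [powerEdges, filter_image, sum_image fun _ _ _ _ h => powerEdge_injective G h]

variable {R : Type*} [CommSemiring R] (f : V → R) (g : Sym2 V → R)

lemma sum_powerEdges_inl (i : V) :
    ∑ E ∈ (powerEdges G k).filter (Sum.inl i ∈ ·),
        ∏ v ∈ E.erase (Sum.inl i), Sum.elim f (fun p => g p.1) v =
      ∑ j ∈ G.neighborFinset i, f j * g s(i, j) ^ (k - 2) := by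
  rw [sum_filter_powerEdges]
  symm
  refine sum_bij (fun j hj => ⟨s(i, j), (G.mem_neighborFinset i j).1 hj⟩) ?_ ?_ ?_ ?_
  · intro j hj
    simp [powerEdge_eq_disjSum]
  · intro j _ j' _ h
    exact Sym2.congr_right.1 (congrArg Subtype.val h)
  · intro e he
    obtain ⟨j, hj⟩ := Sym2.mem_iff_exists.1 (by simpa [powerEdge_eq_disjSum] using he)
    have hadj : G.Adj i j := by simpa [hj] using e.2
    exact ⟨j, (G.mem_neighborFinset i j).2 hadj, Subtype.ext hj.symm⟩
  · intro j hj
    have hij : i ≠ j := ((G.mem_neighborFinset i j).1 hj).ne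
    rw [powerEdge_eq_disjSum, erase_inl_disjSum, prod_disjSum, Sym2.toFinset_mk_eq,
      erase_insert (notMem_singleton.2 hij)]
    simp

lemma sum_powerEdges_inr (e : G.edgeSet) (t : Fin (k - 2)) :
    ∑ E ∈ (powerEdges G k).filter (Sum.inr (e, t) ∈ ·),
        ∏ v ∈ E.erase (Sum.inr (e, t)), Sum.elim f (fun p => g p.1) v =
      (∏ a ∈ (e : Sym2 V).toFinset, f a) * g e ^ (k - 3) := by
  have hfilter : ({e' | Sum.inr (e, t) ∈ powerEdge G k e'} : Finset G.edgeSet) = {e} := by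
    ext
    simp [powerEdge_eq_disjSum, eq_comm]
  rw [sum_filter_powerEdges, hfilter, sum_singleton, powerEdge_eq_disjSum, erase_inr_disjSum,
    prod_disjSum]
  have hconst : ∀ p ∈ ({e} ×ˢ univ).erase (e, t), g p.1 = g e := by
    intro p hp
    rw [(mem_product.1 (mem_of_mem_erase hp)).1 |> mem_singleton.1]
  simp only [Sum.elim_inl, Sum.elim_inr]
  rw [prod_congr rfl hconst, prod_const, card_erase_of_mem (by simp), card_product,
    card_singleton, card_univ, Fintype.card_fin, one_mul, Nat.sub_sub]

theorem isHypergraphEigenvalue_powerEdges_three_of_signed_eigen {ε : Sym2 V → ℂ}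
    (hε : ∀ e, ε e ^ 2 = 1) {μ : ℂ} (hμ : μ ≠ 0) {z : V → ℂ} (hz : z ≠ 0)
    (heig : ∀ i, μ ^ 3 * z i = ∑ j ∈ G.neighborFinset i, ε s(i, j) * z j) :
    IsHypergraphEigenvalue 3 (powerEdges G 3) (μ ^ 2) := by
  choose y hy using fun i => IsAlgClosed.exists_pow_nat_eq (z i) three_pos
  set w : Sym2 V → ℂ := fun e =>
    ε e * Sym2.lift ⟨fun a b => y a * y b, fun a b => mul_comm (y a) (y b)⟩ e / μ
  refine ⟨Sum.elim (fun i => y i ^ 2) (fun p => w p.1), ?_, ?_⟩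
  · obtain ⟨i, hi⟩ := Function.ne_iff.1 hz
    intro h
    have hyi : y i ^ 2 = 0 := congrFun h (Sum.inl i)
    exact hi (by rw [← hy i, pow_eq_zero_iff two_ne_zero |>.1 hyi]; simp)
  · rintro (i | ⟨⟨⟨a, b⟩, hab⟩, t⟩)
    · rw [sum_powerEdges_inl, Sum.elim_inl]
      calc μ ^ 2 * (y i ^ 2) ^ (3 - 1)
          = y i / μ * (μ ^ 3 * z i) := by rw [← hy i]; field_simp; ring
        _ = ∑ j ∈ G.neighborFinset i, y j ^ 2 * w s(i, j) ^ (3 - 2) := by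
          rw [heig, mul_sum]
          refine sum_congr rfl fun j _ => ?_
          simp only [w, Sym2.lift_mk, ← hy j]
          ring
    · rw [sum_powerEdges_inr, Sym2.toFinset_mk_eq, prod_pair (G.ne_of_adj hab)]
      simp only [Sum.elim_inr, w, Sym2.lift_mk]
      rw [Nat.sub_self, pow_zero, mul_one, div_pow, mul_pow, hε]
      field_simp
      ring

end SimpleGraph

lemma top_fin_four_signed_eigen {θ : ℂ} (hθ : θ ^ 2 = 5) (i : Fin 4) :
    θ * ![1, 1, (θ + 1) / 2, (θ + 1) / 2] i =
      ∑ j ∈ (⊤ : SimpleGraph (Fin 4)).neighborFinset i,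
        (if s(i, j) = s(0, 1) then -1 else 1) * ![1, 1, (θ + 1) / 2, (θ + 1) / 2] j := by
  rw [SimpleGraph.neighborFinset_top, compl_singleton, sum_erase_eq_sub (mem_univ i),
    Fin.sum_univ_four]
  fin_cases i <;> simp <;> linear_combination hθ / 2

/-- The real cube root of `5`, i.e. `5^(1/3)`, is an eigenvalue of the 3-power hypergraph
`K₄^(3)`, where `K₄ = ⊤ : SimpleGraph (Fin 4)` is the complete graph on four vertices. -/
theorem cbrt_five_eigenvalue_of_K4_power3 :
    IsHypergraphEigenvalue 3 (powerEdges (⊤ : SimpleGraph (Fin 4)) 3)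
      ((((5 : ℝ) ^ ((1 : ℝ) / 3) : ℝ) : ℂ)) := by
  have hcbrt : ((5 : ℝ) ^ ((1 : ℝ) / 3)) ^ 3 = 5 := by
    rw [← Real.rpow_natCast, ← Real.rpow_mul (by norm_num)]
    norm_num
  obtain ⟨μ, hμ⟩ := IsAlgClosed.exists_pow_nat_eq (((5 : ℝ) ^ ((1 : ℝ) / 3) : ℝ) : ℂ) two_pos
  have hθ : (μ ^ 3) ^ 2 = 5 := by
    rw [← pow_mul, show 3 * 2 = 2 * 3 from rfl, pow_mul, hμ]
    exact_mod_cast hcbrt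
  have hμ0 : μ ≠ 0 := by
    rintro rfl
    norm_num at hθ
  rw [← hμ]
  exact (⊤ : SimpleGraph (Fin 4)).isHypergraphEigenvalue_powerEdges_three_of_signed_eigen
    (ε := fun e => if e = s(0, 1) then -1 else 1)
    (z := ![1, 1, (μ ^ 3 + 1) / 2, (μ ^ 3 + 1) / 2])
    (fun e => by split_ifs <;> norm_num) hμ0 (Function.ne_iff.2 ⟨0, by simp⟩)
    (top_fin_four_signed_eigen hθ)
end

section
/- Let G be a finite simple graph, let k ≥ 4 be an integer, and let (λ, x) be an eigenpair of the k-power hypergraph G^(k) with λ ≠ 0. Then there exists a subgraph Ĝ of G whose vertex set is contained in {i ∈ V(G) : x_i ≠ 0} and a sign function π on the edges of Ĝ such that the signed graph Ĝ_π has an eigenvalue β with β² = λ^k. -/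
open Finset

section Aux
set_option linter.unusedSectionVars false
variable {V : Type*} [Fintype V] [DecidableEq V] (G : SimpleGraph V) [DecidableRel G.Adj] (k : ℕ)

lemma sym2_rep (z : Sym2 V) : ∃ u v : V, z = s(u, v) := Sym2.ind (fun u v => ⟨u, v, rfl⟩) z

lemma mem_powerEdge_inl {i : V} {e : G.edgeSet} :
    Sum.inl i ∈ powerEdge G k e ↔ i ∈ (e : Sym2 V) := by
  simp [powerEdge]

lemma mem_powerEdge_inr {f e : G.edgeSet} {t : Fin (k-2)} :
    Sum.inr (f, t) ∈ powerEdge G k e ↔ f = e := by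
  simp [powerEdge, Prod.ext_iff]

lemma powerEdge_injective (hk : 4 ≤ k) : Function.Injective (powerEdge G k) := by
  intro e e' h
  have ht : (0 : ℕ) < k - 2 := by omega
  have h1 : Sum.inr (e, (⟨0, ht⟩ : Fin (k-2))) ∈ powerEdge G k e' := by
    rw [← h, mem_powerEdge_inr]
  exact (mem_powerEdge_inr G k).mp h1

lemma powerEdge_eq {e : G.edgeSet} {u v : V} (h : (e : Sym2 V) = s(u,v)) :
    powerEdge G k e = insert (Sum.inl u) (insert (Sum.inl v)
      ((univ : Finset (Fin (k-2))).image fun t => Sum.inr (e, t))) := by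
  ext w
  rcases w with i | ⟨f, t⟩ <;>
    simp [powerEdge, h, Sym2.mem_iff, Prod.ext_iff] <;> tauto

end Aux

/-- If `(lam, x)` is an eigenpair of `G^(k)` with `k ≥ 4` and `lam ≠ 0`, then there exist a
subgraph `Ĝ` of `G` (vertex set `S` contained in the support of `x`, edge set `E' ⊆ E(G)` with
edges inside `S`) and a sign function `π` on its edges, such that the signed graph `Ĝ_π` has an
eigenvalue `β` with `β² = lam^k`. -/
theorem power_hypergraph_eigenpair_to_signed_subgraph
    {V : Type*} [Fintype V] [DecidableEq V] (G : SimpleGraph V) [DecidableRel G.Adj]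
    (k : ℕ) (hk : 4 ≤ k) (lam : ℂ) (x : V ⊕ (G.edgeSet × Fin (k - 2)) → ℂ)
    (hpair : IsHypergraphEigenpair k (powerEdges G k) lam x) (hlam : lam ≠ 0) :
    ∃ (S : Finset V) (E' : Finset (Sym2 V)) (π : Sym2 V → ℂ),
      (∀ i ∈ S, x (Sum.inl i) ≠ 0) ∧
      E' ⊆ G.edgeFinset ∧ (∀ e ∈ E', ∀ v ∈ e, v ∈ S) ∧
      (∀ e ∈ E', π e = 1 ∨ π e = -1) ∧
      ∃ (β : ℂ) (y : ↥S → ℂ), β ^ 2 = lam ^ k ∧ y ≠ 0 ∧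
        Matrix.mulVec
          (Matrix.of fun i j : ↥S =>
            if s((i : V), (j : V)) ∈ E' then π s((i : V), (j : V)) else 0) y
          = β • y := by
  obtain ⟨hx0, heqn⟩ := hpair
  set c : G.edgeSet → ℂ := fun e => ∏ w ∈ powerEdge G k e, x w with hc
  -- restated eigenvalue equation
  have heq' : ∀ w, lam * x w ^ (k-1) =
      ∑ e ∈ univ.filter (fun e : G.edgeSet => w ∈ powerEdge G k e),
        ∏ v ∈ (powerEdge G k e).erase w, x v := by
    intro w
    rw [heqn w, powerEdges, Finset.filter_image, Finset.sum_image
      (fun a _ b _ h => powerEdge_injective G k hk h)]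
  -- equation at a new vertex
  have hnew : ∀ (e : G.edgeSet) (t : Fin (k-2)), lam * x (Sum.inr (e,t)) ^ k = c e := by
    intro e t
    have h1 := heq' (Sum.inr (e,t))
    have hfilt : univ.filter (fun e' : G.edgeSet => Sum.inr (e,t) ∈ powerEdge G k e') = {e} := by
      ext e'; simp [mem_powerEdge_inr, eq_comm]
    rw [hfilt, Finset.sum_singleton] at h1
    have hmem : Sum.inr (e,t) ∈ powerEdge G k e := (mem_powerEdge_inr G k).mpr rfl
    have hk1 : k - 1 + 1 = k := by omega
    calc lam * x (Sum.inr (e,t)) ^ k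
        = lam * x (Sum.inr (e,t)) ^ (k-1) * x (Sum.inr (e,t)) := by
          rw [mul_assoc, pow_sub_one_mul (by omega : k ≠ 0)]
      _ = (∏ v ∈ (powerEdge G k e).erase (Sum.inr (e,t)), x v) * x (Sum.inr (e,t)) := by
          rw [h1]
      _ = c e := by simp only [hc]; rw [mul_comm, Finset.mul_prod_erase _ _ hmem]
  -- equation at an original vertex
  have hvert : ∀ i : V, lam * x (Sum.inl i) ^ k =
      ∑ e ∈ univ.filter (fun e : G.edgeSet => i ∈ (e : Sym2 V)), c e := by
    intro i
    have h1 := heq' (Sum.inl i)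
    have hfilt : univ.filter (fun e : G.edgeSet => Sum.inl i ∈ powerEdge G k e)
        = univ.filter (fun e : G.edgeSet => i ∈ (e : Sym2 V)) := by
      apply Finset.filter_congr; intro e _; simp [mem_powerEdge_inl]
    rw [hfilt] at h1
    have hk1 : k - 1 + 1 = k := by omega
    calc lam * x (Sum.inl i) ^ k
        = lam * x (Sum.inl i) ^ (k-1) * x (Sum.inl i) := by
          rw [mul_assoc, pow_sub_one_mul (by omega : k ≠ 0)]
      _ = (∑ e ∈ univ.filter (fun e : G.edgeSet => i ∈ (e : Sym2 V)),
            ∏ v ∈ (powerEdge G k e).erase (Sum.inl i), x v) * x (Sum.inl i) := by rw [h1]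
      _ = ∑ e ∈ univ.filter (fun e : G.edgeSet => i ∈ (e : Sym2 V)), c e := by
          rw [Finset.sum_mul]
          refine Finset.sum_congr rfl fun e he => ?_
          have hi : i ∈ (e : Sym2 V) := (Finset.mem_filter.mp he).2
          simp only [hc]
          rw [mul_comm, Finset.mul_prod_erase _ _ ((mem_powerEdge_inl G k).mpr hi)]
  -- decomposition of c
  have hsplit : ∀ (e : G.edgeSet) (u v : V), (e : Sym2 V) = s(u,v) →
      c e = x (Sum.inl u) * x (Sum.inl v) * ∏ t : Fin (k-2), x (Sum.inr (e,t)) := by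
    intro e u v h
    have hadj : G.Adj u v := by rw [← SimpleGraph.mem_edgeSet, ← h]; exact e.prop
    have huv : u ≠ v := hadj.ne
    simp only [hc]
    rw [powerEdge_eq G k h, Finset.prod_insert, Finset.prod_insert, Finset.prod_image]
    · ring
    · intro a _ b _ hab; simpa using hab
    · simp
    · simp [huv]
  -- nonzero factors
  have hce_nz : ∀ (e : G.edgeSet), c e ≠ 0 → ∀ w ∈ powerEdge G k e, x w ≠ 0 := by
    intro e hce w hw hxw
    exact hce (Finset.prod_eq_zero hw hxw)
  -- key quadratic relation
  have hce_rel : ∀ (e : G.edgeSet), c e ≠ 0 → ∀ u v : V, (e : Sym2 V) = s(u,v) →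
      lam ^ (k-2) * (c e) ^ 2 = x (Sum.inl u) ^ k * x (Sum.inl v) ^ k := by
    intro e hce u v h
    set P : ℂ := ∏ t : Fin (k-2), x (Sum.inr (e,t)) with hP
    have h1 : lam ^ (k-2) * P ^ k = (c e) ^ (k-2) := by
      calc lam ^ (k-2) * P ^ k = ∏ t : Fin (k-2), (lam * x (Sum.inr (e,t)) ^ k) := by
            rw [Finset.prod_mul_distrib, Finset.prod_const, Finset.prod_pow, hP]
            simp
        _ = (c e) ^ (k-2) := by
            rw [Finset.prod_congr rfl fun t _ => hnew e t, Finset.prod_const]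
            simp
    have h2 : (c e) ^ k = x (Sum.inl u) ^ k * x (Sum.inl v) ^ k * P ^ k := by
      rw [hsplit e u v h, hP]; ring
    have h3 : (c e) ^ (k-2) * (lam ^ (k-2) * (c e) ^ 2)
        = (c e) ^ (k-2) * (x (Sum.inl u) ^ k * x (Sum.inl v) ^ k) := by
      have hkk : k - 2 + 2 = k := by omega
      calc (c e) ^ (k-2) * (lam ^ (k-2) * (c e) ^ 2)
          = lam ^ (k-2) * (c e) ^ (k - 2 + 2) := by rw [pow_add]; ring
        _ = lam ^ (k-2) * (c e) ^ k := by rw [hkk]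
        _ = lam ^ (k-2) * (x (Sum.inl u) ^ k * x (Sum.inl v) ^ k * P ^ k) := by rw [h2]
        _ = (lam ^ (k-2) * P ^ k) * (x (Sum.inl u) ^ k * x (Sum.inl v) ^ k) := by ring
        _ = (c e) ^ (k-2) * (x (Sum.inl u) ^ k * x (Sum.inl v) ^ k) := by rw [h1]
    exact mul_left_cancel₀ (pow_ne_zero _ hce) h3
  -- square roots
  set Y : V → ℂ := fun i => (x (Sum.inl i) ^ k) ^ (((2:ℕ) : ℂ))⁻¹ with hYdef
  have hY2 : ∀ i : V, Y i ^ 2 = x (Sum.inl i) ^ k := fun i =>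
    Complex.cpow_nat_inv_pow _ two_ne_zero
  set μ : ℂ := (lam ^ (k-2)) ^ (((2:ℕ) : ℂ))⁻¹ with hμdef
  have hμ2 : μ ^ 2 = lam ^ (k-2) := Complex.cpow_nat_inv_pow _ two_ne_zero
  have hμ : μ ≠ 0 := by
    intro h
    apply pow_ne_zero (k-2) hlam
    rw [← hμ2, h]; ring
  classical
  set C : Sym2 V → ℂ := fun e => if h : e ∈ G.edgeSet then c ⟨e, h⟩ else 0 with hCdef
  have hCc : ∀ (e : Sym2 V) (h : e ∈ G.edgeSet), C e = c ⟨e, h⟩ := by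
    intro e h; simp only [hCdef]; rw [dif_pos h]
  set S : Finset V := univ.filter (fun i => x (Sum.inl i) ≠ 0) with hSdef
  set E' : Finset (Sym2 V) := G.edgeFinset.filter (fun e => C e ≠ 0) with hE'def
  set π : Sym2 V → ℂ := Sym2.lift ⟨fun u v => C s(u,v) * μ * (Y u * Y v)⁻¹,
    fun u v => by dsimp only; rw [Sym2.eq_swap, mul_comm (Y u)]⟩ with hπdef
  have hπuv : ∀ u v : V, π s(u,v) = C s(u,v) * μ * (Y u * Y v)⁻¹ := fun u v => rfl
  -- facts about edges in E'
  have hkey : ∀ u v : V, s(u,v) ∈ E' →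
      x (Sum.inl u) ≠ 0 ∧ x (Sum.inl v) ≠ 0 ∧
      (π s(u,v) = 1 ∨ π s(u,v) = -1) ∧
      C s(u,v) = π s(u,v) * Y u * Y v * μ⁻¹ := by
    intro u v hmem
    rw [hE'def, Finset.mem_filter, SimpleGraph.mem_edgeFinset] at hmem
    obtain ⟨he, hC0⟩ := hmem
    have he' : s(u,v) ∈ G.edgeSet := he
    have hce : c ⟨s(u,v), he'⟩ ≠ 0 := by rw [← hCc _ he']; exact hC0
    have hu : x (Sum.inl u) ≠ 0 := by
      refine hce_nz _ hce _ ((mem_powerEdge_inl G k).mpr ?_) 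
      exact Sym2.mem_mk_left u v
    have hv : x (Sum.inl v) ≠ 0 := by
      refine hce_nz _ hce _ ((mem_powerEdge_inl G k).mpr ?_)
      exact Sym2.mem_mk_right u v
    have hYu : Y u ≠ 0 := fun h => hu (by
      have := hY2 u; rw [h] at this
      exact pow_eq_zero_iff (by omega : k ≠ 0) |>.mp (by rw [← this]; ring))
    have hYv : Y v ≠ 0 := fun h => hv (by
      have := hY2 v; rw [h] at this
      exact pow_eq_zero_iff (by omega : k ≠ 0) |>.mp (by rw [← this]; ring))
    have hrel := hce_rel ⟨s(u,v), he'⟩ hce u v rfl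
    have hsq : π s(u,v) ^ 2 = 1 := by
      rw [hπuv]
      have : (C s(u,v) * μ * (Y u * Y v)⁻¹) ^ 2
          = (lam ^ (k-2) * (c ⟨s(u,v), he'⟩) ^ 2) * ((Y u ^ 2) * (Y v ^ 2))⁻¹ := by
        rw [hCc _ he']
        rw [mul_pow, mul_pow, hμ2]; ring
      rw [this, hrel, hY2, hY2]
      field_simp
    refine ⟨hu, hv, sq_eq_one_iff.mp hsq, ?_⟩
    rw [hπuv]
    field_simp
  -- edges of E' have endpoints in S
  have hends : ∀ e ∈ E', ∀ w ∈ e, w ∈ S := by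
    intro e he w hw
    obtain ⟨u, v, rfl⟩ := sym2_rep e
    obtain ⟨hu, hv, -, -⟩ := hkey u v he
    rw [hSdef, Finset.mem_filter]
    rcases Sym2.mem_iff.mp hw with rfl | rfl
    · exact ⟨Finset.mem_univ _, hu⟩
    · exact ⟨Finset.mem_univ _, hv⟩
  -- S is nonempty
  have hSne : S.Nonempty := by
    obtain ⟨w, hw⟩ := Function.ne_iff.mp hx0
    simp only [Pi.zero_apply] at hw
    rcases w with i | ⟨e, t⟩
    · exact ⟨i, by rw [hSdef, Finset.mem_filter]; exact ⟨Finset.mem_univ _, hw⟩⟩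
    · have hce : c e ≠ 0 := by
        rw [← hnew e t]
        exact mul_ne_zero hlam (pow_ne_zero _ hw)
      obtain ⟨u, v, huv⟩ := sym2_rep (e : Sym2 V)
      have hu : x (Sum.inl u) ≠ 0 := hce_nz e hce _
        ((mem_powerEdge_inl G k).mpr (by rw [huv]; exact Sym2.mem_mk_left u v))
      exact ⟨u, by rw [hSdef, Finset.mem_filter]; exact ⟨Finset.mem_univ _, hu⟩⟩
  -- the incidence sum identity
  have hsum : ∀ i : V, ∑ j : V, (if s(i,j) ∈ E' then C s(i,j) else 0)
      = lam * x (Sum.inl i) ^ k := by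
    intro i
    rw [hvert i, ← Finset.sum_filter]
    have hzero : ∀ e ∈ univ.filter (fun e : G.edgeSet => i ∈ (e : Sym2 V)),
        e ∉ univ.filter (fun e : G.edgeSet => i ∈ (e : Sym2 V) ∧ c e ≠ 0) → c e = 0 := by
      intro e he hne
      rw [Finset.mem_filter] at he hne
      by_contra h
      exact hne ⟨Finset.mem_univ _, he.2, h⟩
    rw [← Finset.sum_subset (fun e he => by
      rw [Finset.mem_filter] at he ⊢; exact ⟨he.1, he.2.1⟩) hzero]
    refine Finset.sum_bij' (i := fun j hj => (⟨s(i,j), ?_⟩ : G.edgeSet))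
      (j := fun e he => Sym2.Mem.other' (?_ : i ∈ (e : Sym2 V))) ?_ ?_ ?_ ?_ ?_
    · -- s(i,j) ∈ G.edgeSet
      rw [Finset.mem_filter] at hj
      exact SimpleGraph.mem_edgeFinset.mp (Finset.mem_of_mem_filter _ (by
        rw [hE'def] at hj; exact hj.2))
    · rw [Finset.mem_filter] at he
      exact he.2.1
    · -- maps into target
      intro j hj
      rw [Finset.mem_filter] at hj ⊢
      have hjE : s(i,j) ∈ E' := hj.2
      rw [hE'def, Finset.mem_filter] at hjE
      refine ⟨Finset.mem_univ _, Sym2.mem_mk_left i j, ?_⟩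
      rw [← hCc s(i,j) _]
      exact hjE.2
    · -- maps back into source
      intro e he
      rw [Finset.mem_filter] at he ⊢
      refine ⟨Finset.mem_univ _, ?_⟩
      have hspec := Sym2.other_spec' he.2.1
      have heE : (e : Sym2 V) ∈ E' := by
        rw [hE'def, Finset.mem_filter]
        refine ⟨SimpleGraph.mem_edgeFinset.mpr e.prop, ?_⟩
        rw [hCc _ e.prop, Subtype.coe_eta]
        exact he.2.2
      rw [hspec]
      exact heE
    · -- left inverse
      intro j hj
      rw [Finset.mem_filter] at hj
      have hjE : s(i,j) ∈ E' := hj.2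
      have hine : i ≠ j := by
        rintro rfl
        have := (Finset.mem_filter.mp (by rw [hE'def] at hjE; exact hjE)).1
        exact G.irrefl (SimpleGraph.mem_edgeFinset.mp this)
      exact Sym2.congr_right.mp (Sym2.other_spec' _)
    · -- right inverse
      intro e he
      apply Subtype.ext
      exact Sym2.other_spec' _
    · -- values agree
      intro j hj
      rw [Finset.mem_filter] at hj
      rw [hCc s(i,j)]
  have hYnz : ∀ i ∈ S, Y i ≠ 0 := by
    intro i hi h
    rw [hSdef, Finset.mem_filter] at hi
    apply pow_ne_zero k hi.2
    rw [← hY2 i, h]; ring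
  refine ⟨S, E', π, ?_, ?_, hends, ?_, ?_⟩
  · intro i hi; rw [hSdef, Finset.mem_filter] at hi; exact hi.2
  · rw [hE'def]; exact Finset.filter_subset _ _
  · intro e he
    obtain ⟨u, v, rfl⟩ := sym2_rep e
    exact (hkey u v he).2.2.1
  · refine ⟨lam * μ, fun j => Y (j : V), ?_, ?_, ?_⟩
    · rw [mul_pow, hμ2, ← pow_add]
      congr 1; omega
    · obtain ⟨i, hi⟩ := hSne
      intro h
      exact hYnz i hi (congrFun h ⟨i, hi⟩)
    · funext i0
      obtain ⟨i, hiS⟩ := i0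
      have hYi : Y i ≠ 0 := hYnz i hiS
      simp only [Matrix.mulVec, dotProduct, Matrix.of_apply, Pi.smul_apply, smul_eq_mul]
      calc ∑ j : ↥S, (if s(i,(j:V)) ∈ E' then π s(i,(j:V)) else 0) * Y (j:V)
          = ∑ j ∈ S, (if s(i,j) ∈ E' then π s(i,j) * Y j else 0) := by
            rw [← Finset.sum_coe_sort S (fun j => if s(i,j) ∈ E' then π s(i,j) * Y j else 0)]
            exact Finset.sum_congr rfl fun j _ => by rw [ite_mul, zero_mul]
        _ = ∑ j : V, (if s(i,j) ∈ E' then π s(i,j) * Y j else 0) := by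
            apply Finset.sum_subset (Finset.subset_univ S)
            intro j _ hjS
            rw [if_neg]
            intro hjE
            exact hjS (hends _ hjE j (Sym2.mem_mk_right i j))
        _ = ∑ j : V, (if s(i,j) ∈ E' then C s(i,j) else 0) * (μ * (Y i)⁻¹) := by
            refine Finset.sum_congr rfl fun j _ => ?_
            by_cases h : s(i,j) ∈ E'
            · rw [if_pos h, if_pos h]
              obtain ⟨-, -, -, hCe⟩ := hkey i j h
              rw [hCe]
              field_simp
            · rw [if_neg h, if_neg h, zero_mul]
        _ = (lam * x (Sum.inl i) ^ k) * (μ * (Y i)⁻¹) := by rw [← Finset.sum_mul, hsum i]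
        _ = lam * μ * Y i := by
            rw [← hY2 i]
            field_simp
end
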